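/- arXiv:1305.1003 — 5 statements merged into one kernel-verified Lean document; each statement's English description precedes it below -/
import Mathlib

section
/- Let n ≥ 3, p ∈ (1,2], β > 0, and a ∈ ℝ with 0 ≤ −a < pβ < n. If q ∈ (0, (n+a)(p−1)/(n−pβ)], then the integral equation u(x) = R(x)·W_{β,p}(|·|^a u^q)(x) on ℝ^n has no positive solution for any double bounded function R. -/
open MeasureTheory Metric Set Filter ENNReal

/-- The Wolff potential `W_{β,p}(f)(x)`. -/
noncomputable def wolff (n : ℕ) (β p : ℝ) (f : EuclideanSpace ℝ (Fin n) → ℝ)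
    (x : EuclideanSpace ℝ (Fin n)) : ℝ≥0∞ :=
  ∫⁻ t in Set.Ioi (0 : ℝ),
    ((ENNReal.ofReal (t ^ (p * β - (n : ℝ))) *
        ∫⁻ y in Metric.ball x t, ENNReal.ofReal (f y)) ^ (1 / (p - 1))) /
      ENNReal.ofReal t

/-- `R` is double bounded: `1/C ≤ R x ≤ C` for some `C > 0`. -/
def DoubleBounded {α : Type*} (R : α → ℝ) : Prop :=
  ∃ C : ℝ, 0 < C ∧ ∀ x, 1 / C ≤ R x ∧ R x ≤ C

/-- `u` is a positive (continuous) solution of the integral equation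
`u(x) = R(x)·W_{β,p}(|·|^a u^q)(x)`, with finite Wolff potential. -/
def IsIESolutionWith (n : ℕ) (β p a q : ℝ)
    (R u : EuclideanSpace ℝ (Fin n) → ℝ) : Prop :=
  Continuous u ∧ (∀ x, 0 < u x) ∧
  ∀ x, wolff n β p (fun y => ‖y‖ ^ a * u y ^ q) x ≠ ∞ ∧
    u x = R x * (wolff n β p (fun y => ‖y‖ ^ a * u y ^ q) x).toReal

/-!
Write `g t` for the mass of `|y|^a u^q` on `B_t(0)`, `σ = (n - pβ)/(p - 1)` and `θ = q/(p - 1)`.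
For `|y| < 2t` every radius in `(3t, 6t]` of the Wolff potential at `y` sees all of `B_t(0)`,
so `u y ≳ t^(-σ) g(t)^(1/(p-1))`. Integrating `|y|^a u^q` over the annulus `t < |y| < 2t` gives
`g(2t) ≥ g(t) + c t^δ g(t)^θ` with `δ = n + a - qσ`, and `δ ≥ 0` is exactly the upper bound on `q`.
Since `δ - (1 - θ)(n - pβ) = a + pβ > 0`, along the radii `2^k T` this recursion forces
`g(2^k T) ≥ 2^(k(n - pβ))` for infinitely many `k`, and each such `k` contributes a fixed positive
amount to the part `t ∈ (2^k T, 2^(k+1) T]` of the integral defining `W(0)`, so `W(0) = ∞`.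
-/

theorem MeasureTheory.lintegral_iUnion_eq_top_of_frequently_le {α : Type*} [MeasurableSpace α]
    {μ : Measure α} {s : ℕ → Set α} (hs : ∀ k, MeasurableSet (s k))
    (hd : Pairwise (Function.onFun Disjoint s)) {f : α → ℝ≥0∞} {ε : ℝ≥0∞} (hε : ε ≠ 0)
    (h : ∃ᶠ k in atTop, ε ≤ ∫⁻ x in s k, f x ∂μ) :
    ∫⁻ x in ⋃ k, s k, f x ∂μ = ∞ := by
  set good := {k | ε ≤ ∫⁻ x in s k, f x ∂μ}
  have : Infinite good := (Nat.frequently_atTop_iff_infinite.1 h).to_subtype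
  rw [lintegral_iUnion hs hd, eq_top_iff]
  calc ∞ = ∑' _ : good, ε := (ENNReal.tsum_const_eq_top_of_ne_zero hε).symm
    _ ≤ ∑' k : good, ∫⁻ x in s k, f x ∂μ := ENNReal.tsum_le_tsum fun k => k.2
    _ ≤ ∑' k, ∫⁻ x in s k, f x ∂μ :=
      ENNReal.tsum_comp_le_tsum_of_injective Subtype.val_injective _

theorem MeasureTheory.Measure.addHaar_ball_le_addHaar_ball_two_mul_diff_closedBall
    {E : Type*} [NormedAddCommGroup E] [NormedSpace ℝ E] [MeasurableSpace E] [BorelSpace E]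
    [FiniteDimensional ℝ E] [Nontrivial E] (μ : Measure E) [μ.IsAddHaarMeasure] (x : E) (r : ℝ) :
    μ (ball x r) ≤ μ (ball x (2 * r) \ closedBall x r) := by
  rcases le_or_gt r 0 with hr | hr
  · simp [ball_eq_empty.2 hr]
  have hfin : μ (ball x r) ≠ ∞ := measure_ball_lt_top.ne
  have htwo : (2 : ℝ≥0∞) ≤ ENNReal.ofReal (2 ^ Module.finrank ℝ E) := by
    rw [ENNReal.ofReal_pow zero_le_two, ENNReal.ofReal_ofNat]
    exact le_self_pow₀ one_le_two Module.finrank_pos.ne'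
  rw [measure_sdiff (closedBall_subset_ball (by linarith)) measurableSet_closedBall.nullMeasurableSet
      measure_closedBall_lt_top.ne, addHaar_closedBall_eq_addHaar_ball,
    addHaar_ball_mul μ x zero_le_two, ← addHaar_ball_center μ x]
  refine ENNReal.le_sub_of_add_le_left hfin ?_
  rw [← two_mul]
  exact mul_le_mul_left htwo _

theorem MeasureTheory.setLIntegral_ball_add_mul_le {X : Type*} [PseudoMetricSpace X]
    [MeasurableSpace X] [OpensMeasurableSpace X] (μ : Measure X) (F : X → ℝ≥0∞) (x : X)
    {r r' : ℝ} (hr : r ≤ r') {L : ℝ≥0∞} (hL : ∀ y ∈ ball x r' \ closedBall x r, L ≤ F y) :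
    ∫⁻ y in ball x r, F y ∂μ + L * μ (ball x r' \ closedBall x r) ≤ ∫⁻ y in ball x r', F y ∂μ := by
  set A := ball x r' \ closedBall x r
  have hA : MeasurableSet A := measurableSet_ball.diff measurableSet_closedBall
  have hdisj : Disjoint (ball x r) A := disjoint_sdiff_right.mono_left ball_subset_closedBall
  calc ∫⁻ y in ball x r, F y ∂μ + L * μ A
      ≤ ∫⁻ y in ball x r, F y ∂μ + ∫⁻ y in A, F y ∂μ := by
        gcongr
        rw [← setLIntegral_const]
        exact setLIntegral_mono' hA hL
    _ = ∫⁻ y in ball x r ∪ A, F y ∂μ := (lintegral_union hA hdisj).symm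
    _ ≤ _ := lintegral_mono_set (union_subset (ball_subset_ball hr) sdiff_subset)

theorem tendsto_atTop_of_add_mul_pow_mul_rpow_le {a : ℕ → ℝ} {c θ A : ℝ} (hc : 0 < c)
    (hθ : 0 ≤ θ) (hA : 1 ≤ A) (ha₀ : 0 < a 0)
    (hrec : ∀ k, a k + c * A ^ k * a k ^ θ ≤ a (k + 1)) : Tendsto a atTop atTop := by
  have hlin : ∀ k : ℕ, a 0 ≤ a k ∧ a 0 + k * (c * a 0 ^ θ) ≤ a k := by
    intro k
    induction k with
    | zero => simp
    | succ k ih =>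
      have hinc : c * a 0 ^ θ ≤ c * A ^ k * a k ^ θ := by
        rw [mul_assoc]
        gcongr
        calc a 0 ^ θ = 1 * a 0 ^ θ := (one_mul _).symm
          _ ≤ A ^ k * a k ^ θ := by gcongr; exacts [one_le_pow₀ hA, ih.1]
      push_cast
      constructor <;> nlinarith [hrec k, show 0 ≤ c * a 0 ^ θ by positivity]
  exact tendsto_atTop_mono (fun k => (hlin k).2) <| tendsto_atTop_add_const_left _ _ <|
    tendsto_natCast_atTop_atTop.atTop_mul_const (by positivity)

theorem frequently_pow_le_of_add_mul_pow_mul_rpow_le {a : ℕ → ℝ} {c θ A B : ℝ} (hc : 0 < c)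
    (hA : 1 ≤ A) (hB : 0 < B) (hAB : 1 < A * B ^ (θ - 1)) (ha₀ : 0 < a 0)
    (hrec : ∀ k, a k + c * A ^ k * a k ^ θ ≤ a (k + 1)) :
    ∃ᶠ k in atTop, B ^ k ≤ a k := by
  have hpos : ∀ k, 0 < a k := by
    intro k
    induction k with
    | zero => exact ha₀
    | succ k ih => linarith [hrec k, show 0 ≤ c * A ^ k * a k ^ θ by positivity]
  -- If `a k < B ^ k` eventually, the relative increment `c A^k (a k)^(θ-1)` tends to infinity,
  -- so `a k / B ^ k` eventually doubles at every step.
  by_contra hfreq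
  have hsmall : ∀ᶠ k in atTop, a k < B ^ k := by simpa using hfreq
  have hinc : Tendsto (fun k => c * A ^ k * a k ^ (θ - 1)) atTop atTop := by
    rcases le_or_gt θ 1 with hθ | hθ
    · refine tendsto_atTop_mono' atTop (hsmall.mono fun k hk => ?_)
        ((tendsto_pow_atTop_atTop_of_one_lt hAB).const_mul_atTop hc)
      rw [mul_pow, ← mul_assoc, Real.rpow_pow_comm hB.le]
      exact mul_le_mul_of_nonneg_left
        (Real.rpow_le_rpow_of_nonpos (hpos k) hk.le (by linarith)) (by positivity)
    · have ha : Tendsto a atTop atTop :=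
        tendsto_atTop_of_add_mul_pow_mul_rpow_le hc (by linarith) hA ha₀ hrec
      refine tendsto_atTop_mono (fun k => ?_)
        (((tendsto_rpow_atTop (y := θ - 1) (by linarith)).comp ha).const_mul_atTop hc)
      simpa using mul_le_mul_of_nonneg_right
        (mul_le_mul_of_nonneg_left (one_le_pow₀ hA : 1 ≤ A ^ k) hc.le)
        (Real.rpow_nonneg (hpos k).le (θ - 1))
  obtain ⟨K, hK⟩ := eventually_atTop.1 (hsmall.and (hinc.eventually_ge_atTop (2 * B)))
  have hdouble : ∀ k ≥ K, 2 * (a k / B ^ k) ≤ a (k + 1) / B ^ (k + 1) := by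
    intro k hk
    have hθ : a k ^ θ = a k ^ (θ - 1) * a k := by
      rw [Real.rpow_sub_one (hpos k).ne', div_mul_cancel₀ _ (hpos k).ne']
    have : 2 * B * a k ≤ a (k + 1) := by
      have := hrec k
      rw [hθ] at this
      nlinarith [(hK k hk).2, hpos k]
    rw [pow_succ, ← mul_div_assoc, div_le_div_iff₀ (by positivity) (by positivity)]
    nlinarith [pow_pos hB k]
  have hgrow := tendsto_atTop_of_geom_le (v := fun j => a (K + j) / B ^ (K + j))
    (by have := hpos K; positivity) one_lt_two fun j => hdouble (K + j) (by omega)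
  obtain ⟨j, hj⟩ := (hgrow.eventually_ge_atTop 1).exists
  rw [le_div_iff₀ (by positivity), one_mul] at hj
  linarith [(hK (K + j) (by omega)).1]

noncomputable def wolffIntegrand (n : ℕ) (β p : ℝ) (f : EuclideanSpace ℝ (Fin n) → ℝ)
    (x : EuclideanSpace ℝ (Fin n)) (t : ℝ) : ℝ≥0∞ :=
  (ENNReal.ofReal (t ^ (p * β - n)) * ∫⁻ y in ball x t, ENNReal.ofReal (f y)) ^ (1 / (p - 1)) /
    ENNReal.ofReal t

-- An infinite mass would read as `0` here; for a solution all masses are finite since `W(0) < ∞`.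
noncomputable def ballMass {n : ℕ} (f : EuclideanSpace ℝ (Fin n) → ℝ) (r : ℝ) : ℝ :=
  (∫⁻ y in ball 0 r, ENNReal.ofReal (f y)).toReal

theorem ballMass_nonneg {n : ℕ} (f : EuclideanSpace ℝ (Fin n) → ℝ) (r : ℝ) : 0 ≤ ballMass f r :=
  ENNReal.toReal_nonneg

section Wolff

variable {n : ℕ} {β p : ℝ} {f : EuclideanSpace ℝ (Fin n) → ℝ} {x : EuclideanSpace ℝ (Fin n)}

theorem wolff_eq_setLIntegral :
    wolff n β p f x = ∫⁻ t in Ioi 0, wolffIntegrand n β p f x t := rfl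

theorem lintegral_ball_ne_top_of_wolff_ne_top (hp : 1 < p) (hW : wolff n β p f x ≠ ∞) (r : ℝ) :
    ∫⁻ y in ball x r, ENNReal.ofReal (f y) ≠ ∞ := by
  intro htop
  have hκ : 0 < 1 / (p - 1) := one_div_pos.2 (sub_pos.2 hp)
  apply hW
  rw [wolff_eq_setLIntegral, eq_top_iff]
  calc ∞ = ∫⁻ _ in Ioi (max r 0), ∞ := by simp
    _ ≤ ∫⁻ t in Ioi (max r 0), wolffIntegrand n β p f x t := by
      refine setLIntegral_mono' measurableSet_Ioi fun t ht => ?_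
      have ht0 : 0 < t := (le_max_right r 0).trans_lt ht
      have hball : ∫⁻ y in ball x t, ENNReal.ofReal (f y) = ∞ :=
        top_unique (htop ▸ lintegral_mono_set (ball_subset_ball ((le_max_left r 0).trans ht.le)))
      rw [wolffIntegrand, hball, ENNReal.mul_top (by simpa using Real.rpow_pos_of_pos ht0 _),
        ENNReal.top_rpow_of_pos hκ, ENNReal.top_div_of_ne_top ENNReal.ofReal_ne_top]
    _ ≤ _ := lintegral_mono_set (Ioi_subset_Ioi (le_max_right r 0))

theorem exists_lintegral_ball_ne_zero_of_wolff_ne_zero (hp : 1 < p) (hW : wolff n β p f x ≠ 0) :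
    ∃ r > 0, ∫⁻ y in ball x r, ENNReal.ofReal (f y) ≠ 0 := by
  by_contra! h
  have hκ : 0 < 1 / (p - 1) := one_div_pos.2 (sub_pos.2 hp)
  apply hW
  rw [wolff_eq_setLIntegral]
  refine (setLIntegral_congr_fun measurableSet_Ioi fun t ht => ?_).trans lintegral_zero
  rw [wolffIntegrand, h t ht, mul_zero, ENNReal.zero_rpow_of_pos hκ, ENNReal.zero_div]

theorem ofReal_le_setLIntegral_Ioc_wolffIntegrand (hp : 1 < p) (hpβ : p * β ≤ n)
    {r S : ℝ} (hS : 0 < S) (hxr : ‖x‖ + r ≤ S) :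
    ENNReal.ofReal (((2 * S) ^ (p * β - n) * ballMass f r) ^ (1 / (p - 1)) / 2) ≤
      ∫⁻ t in Ioc S (2 * S), wolffIntegrand n β p f x t := by
  have hκ : 0 ≤ 1 / (p - 1) := (one_div_pos.2 (sub_pos.2 hp)).le
  have hM := ballMass_nonneg f r
  have hpoint : ∀ t ∈ Ioc S (2 * S), ENNReal.ofReal
      (((2 * S) ^ (p * β - n) * ballMass f r) ^ (1 / (p - 1)) / (2 * S)) ≤
      wolffIntegrand n β p f x t := by
    rintro t ⟨hSt, ht2S⟩
    have ht : 0 < t := hS.trans hSt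
    have hball : ball 0 r ⊆ ball x t := fun y hy => by
      rw [mem_ball, dist_zero_right] at hy
      rw [mem_ball]
      linarith [dist_le_norm_add_norm y x]
    rw [ENNReal.ofReal_div_of_pos (by linarith), ← ENNReal.ofReal_rpow_of_nonneg (by positivity) hκ,
      ENNReal.ofReal_mul (by positivity), wolffIntegrand]
    refine ENNReal.div_le_div (ENNReal.rpow_le_rpow (mul_le_mul' ?_ ?_) hκ)
      (ENNReal.ofReal_le_ofReal ht2S)
    · exact ENNReal.ofReal_le_ofReal (Real.rpow_le_rpow_of_nonpos ht ht2S (by linarith))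
    · exact ENNReal.ofReal_toReal_le.trans (lintegral_mono_set hball)
  calc ENNReal.ofReal (((2 * S) ^ (p * β - n) * ballMass f r) ^ (1 / (p - 1)) / 2)
      = ∫⁻ _ in Ioc S (2 * S),
          ENNReal.ofReal (((2 * S) ^ (p * β - n) * ballMass f r) ^ (1 / (p - 1)) / (2 * S)) := by
        rw [setLIntegral_const, Real.volume_Ioc, ← ENNReal.ofReal_mul (by positivity)]
        congr 1
        field_simp
        ring
    _ ≤ _ := setLIntegral_mono' measurableSet_Ioc hpoint

theorem le_toReal_wolff (hp : 1 < p) (hpβ : p * β ≤ n) {r S : ℝ} (hS : 0 < S)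
    (hxr : ‖x‖ + r ≤ S) (hW : wolff n β p f x ≠ ∞) :
    ((2 * S) ^ (p * β - n) * ballMass f r) ^ (1 / (p - 1)) / 2 ≤ (wolff n β p f x).toReal := by
  rw [← ENNReal.ofReal_le_iff_le_toReal hW, wolff_eq_setLIntegral]
  exact (ofReal_le_setLIntegral_Ioc_wolffIntegrand hp hpβ hS hxr).trans
    (lintegral_mono_set fun t ht => hS.trans ht.1)

theorem wolff_zero_eq_top_of_frequently_pow_le_ballMass (hp : 1 < p) (hpβ : p * β ≤ n)
    {T : ℝ} (hT : 0 < T) (h : ∃ᶠ k in atTop, ((2 : ℝ) ^ (n - p * β)) ^ k ≤ ballMass f (2 ^ k * T)) :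
    wolff n β p f 0 = ∞ := by
  set s : ℕ → Set ℝ := fun k => Ioc (2 ^ k * T) (2 ^ (k + 1) * T)
  have hmono : Monotone fun k : ℕ => (2 : ℝ) ^ k * T := fun i j hij =>
    mul_le_mul_of_nonneg_right (pow_le_pow_right₀ one_le_two hij) hT.le
  have hd : Pairwise (Function.onFun Disjoint s) := by
    simpa [Order.succ_eq_add_one] using hmono.pairwise_disjoint_on_Ioc_succ
  set ε : ℝ := ((2 * T) ^ (p * β - n)) ^ (1 / (p - 1)) / 2
  have hε : ENNReal.ofReal ε ≠ 0 := by
    simp only [ne_eq, ENNReal.ofReal_eq_zero, not_le]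
    positivity
  rw [eq_top_iff, ← lintegral_iUnion_eq_top_of_frequently_le (fun k => measurableSet_Ioc) hd hε ?_,
    wolff_eq_setLIntegral]
  · exact lintegral_mono_set (iUnion_subset fun k t ht => (by positivity : (0 : ℝ) < 2 ^ k * T).trans ht.1)
  refine h.mono fun k hk => ?_
  have hS : (0 : ℝ) < 2 ^ k * T := by positivity
  have := ofReal_le_setLIntegral_Ioc_wolffIntegrand (f := f) (x := 0) (r := 2 ^ k * T) hp hpβ hS
    (by simp)
  rw [show 2 * (2 ^ k * T) = 2 ^ (k + 1) * T by ring] at this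
  refine le_trans (ENNReal.ofReal_le_ofReal ?_) this
  have hX : (0 : ℝ) < ((2 : ℝ) ^ (n - p * β)) ^ k := by positivity
  refine div_le_div_of_nonneg_right (Real.rpow_le_rpow (by positivity) ?_
    (one_div_pos.2 (sub_pos.2 hp)).le) zero_le_two
  rw [show (2 : ℝ) ^ (k + 1) * T = 2 ^ k * (2 * T) by ring, Real.mul_rpow (x := 2 ^ k) (y := 2 * T)
    (by positivity) (by positivity), show p * β - n = -(n - p * β) by ring,
    Real.rpow_neg (pow_nonneg zero_le_two k), ← Real.rpow_pow_comm zero_le_two, inv_mul_eq_div,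
    div_mul_eq_mul_div, le_div_iff₀ hX]
  exact mul_le_mul_of_nonneg_left hk (by positivity)

end Wolff

namespace IsIESolutionWith

variable {n : ℕ} {β p a q : ℝ} {R u : EuclideanSpace ℝ (Fin n) → ℝ}

theorem mul_rpow_ballMass_le (hsol : IsIESolutionWith n β p a q R u) {C : ℝ} (hC : 0 < C)
    (hR : ∀ x, 1 / C ≤ R x) (hp : 1 < p) (hpβ : p * β ≤ n) {t : ℝ} (ht : 0 < t)
    {y : EuclideanSpace ℝ (Fin n)} (hy : ‖y‖ ≤ 2 * t) :
    (6 : ℝ) ^ (-((n - p * β) / (p - 1))) / 2 / C * (t ^ (-((n - p * β) / (p - 1))) *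
      ballMass (fun y => ‖y‖ ^ a * u y ^ q) t ^ (1 / (p - 1))) ≤ u y := by
  obtain ⟨hW, hu⟩ := hsol.2.2 y
  have hg := ballMass_nonneg (fun y => ‖y‖ ^ a * u y ^ q) t
  have hWle := le_toReal_wolff (f := fun y => ‖y‖ ^ a * u y ^ q) hp hpβ (S := 3 * t)
    (r := t) (by positivity) (by linarith) hW
  rw [show 2 * (3 * t) = 6 * t by ring, Real.mul_rpow (by positivity) hg,
    ← Real.rpow_mul (by positivity), show (p * β - n) * (1 / (p - 1)) = -((n - p * β) / (p - 1))
    by ring, Real.mul_rpow (by norm_num) ht.le] at hWle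
  rw [hu, mul_comm (R y)]
  calc _ = (6 : ℝ) ^ (-((n - p * β) / (p - 1))) * (t ^ (-((n - p * β) / (p - 1))) *
        ballMass (fun y => ‖y‖ ^ a * u y ^ q) t ^ (1 / (p - 1))) / 2 * (1 / C) := by ring
    _ ≤ _ := mul_le_mul (by linarith) (hR y) (by positivity) ENNReal.toReal_nonneg

theorem mul_rpow_ballMass_le_of_mem_annulus (hsol : IsIESolutionWith n β p a q R u) {C : ℝ}
    (hC : 0 < C) (hR : ∀ x, 1 / C ≤ R x) (hp : 1 < p) (hpβ : p * β ≤ n) (ha : a ≤ 0)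
    (hq : 0 ≤ q) {t : ℝ} (ht : 0 < t) {y : EuclideanSpace ℝ (Fin n)}
    (hy : y ∈ ball 0 (2 * t) \ closedBall 0 t) :
    2 ^ a * ((6 : ℝ) ^ (-((n - p * β) / (p - 1))) / 2 / C) ^ q *
      (t ^ (a - q * ((n - p * β) / (p - 1))) *
        ballMass (fun y => ‖y‖ ^ a * u y ^ q) t ^ (q / (p - 1))) ≤ ‖y‖ ^ a * u y ^ q := by
  obtain ⟨hy2, hy1⟩ := hy
  rw [mem_ball, dist_zero_right] at hy2
  rw [mem_closedBall, dist_zero_right, not_le] at hy1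
  set σ := (n - p * β) / (p - 1)
  set c₀ := (6 : ℝ) ^ (-σ) / 2 / C
  set g := ballMass (fun y => ‖y‖ ^ a * u y ^ q) t
  have hg : 0 ≤ g := ballMass_nonneg _ t
  calc 2 ^ a * c₀ ^ q * (t ^ (a - q * σ) * g ^ (q / (p - 1)))
      = (2 * t) ^ a * (c₀ * (t ^ (-σ) * g ^ (1 / (p - 1)))) ^ q := by
        rw [Real.mul_rpow zero_le_two ht.le, Real.mul_rpow (x := c₀) (by positivity)
          (by positivity), Real.mul_rpow (x := t ^ (-σ)) (by positivity) (by positivity),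
          ← Real.rpow_mul ht.le, ← Real.rpow_mul hg, show a - q * σ = a + -σ * q by ring,
          Real.rpow_add ht, show q / (p - 1) = 1 / (p - 1) * q by ring]
        ring
    _ ≤ ‖y‖ ^ a * u y ^ q := mul_le_mul (Real.rpow_le_rpow_of_nonpos (ht.trans hy1) hy2.le ha)
        (Real.rpow_le_rpow (by positivity) (hsol.mul_rpow_ballMass_le hC hR hp hpβ ht hy2.le) hq)
        (by positivity) (by positivity)

theorem exists_pos_ballMass_pos (hsol : IsIESolutionWith n β p a q R u) (hp : 1 < p) :
    ∃ T > 0, 0 < ballMass (fun y => ‖y‖ ^ a * u y ^ q) T := by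
  obtain ⟨hW, hu⟩ := hsol.2.2 0
  have hW₀ : wolff n β p (fun y => ‖y‖ ^ a * u y ^ q) 0 ≠ 0 := fun h =>
    (hsol.2.1 0).ne' (by rw [hu, h, ENNReal.toReal_zero, mul_zero])
  obtain ⟨T, hT, hT₀⟩ := exists_lintegral_ball_ne_zero_of_wolff_ne_zero hp hW₀
  exact ⟨T, hT, ENNReal.toReal_pos hT₀ (lintegral_ball_ne_top_of_wolff_ne_top hp hW T)⟩

theorem exists_ballMass_add_le_ballMass_two_mul (hsol : IsIESolutionWith n β p a q R u)
    [NeZero n] {C : ℝ} (hC : 0 < C) (hR : ∀ x, 1 / C ≤ R x) (hp : 1 < p) (hpβ : p * β ≤ n)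
    (ha : a ≤ 0) (hq : 0 ≤ q) :
    ∃ c > 0, ∀ t > 0, ballMass (fun y => ‖y‖ ^ a * u y ^ q) t +
      c * t ^ (n + a - q * ((n - p * β) / (p - 1))) *
        ballMass (fun y => ‖y‖ ^ a * u y ^ q) t ^ (q / (p - 1)) ≤
      ballMass (fun y => ‖y‖ ^ a * u y ^ q) (2 * t) := by
  set f : EuclideanSpace ℝ (Fin n) → ℝ := fun y => ‖y‖ ^ a * u y ^ q
  set σ := (n - p * β) / (p - 1)
  set c₀ := 2 ^ a * ((6 : ℝ) ^ (-σ) / 2 / C) ^ q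
  set v := (volume (ball (0 : EuclideanSpace ℝ (Fin n)) 1)).toReal
  have hv : 0 < v := ENNReal.toReal_pos (measure_ball_pos _ _ one_pos).ne' measure_ball_lt_top.ne
  refine ⟨c₀ * v, by positivity, fun t ht => ?_⟩
  set L := c₀ * (t ^ (a - q * σ) * ballMass f t ^ (q / (p - 1)))
  have hL : 0 ≤ L := by have := ballMass_nonneg f t; positivity
  have hW₀ := (hsol.2.2 0).1
  have hvol := Measure.addHaar_ball_le_addHaar_ball_two_mul_diff_closedBall
    (volume : Measure (EuclideanSpace ℝ (Fin n))) 0 t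
  rw [Measure.addHaar_ball_of_pos _ _ ht, finrank_euclideanSpace_fin] at hvol
  have hmass : (∫⁻ y in ball 0 t, ENNReal.ofReal (f y)) +
      ENNReal.ofReal L * (ENNReal.ofReal (t ^ n) * volume (ball (0 : EuclideanSpace ℝ (Fin n)) 1))
      ≤ ∫⁻ y in ball 0 (2 * t), ENNReal.ofReal (f y) :=
    le_trans (by gcongr) <| setLIntegral_ball_add_mul_le volume _ 0 (by linarith) fun y hy =>
      ENNReal.ofReal_le_ofReal (hsol.mul_rpow_ballMass_le_of_mem_annulus hC hR hp hpβ ha hq ht hy)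
  have := ENNReal.toReal_mono (lintegral_ball_ne_top_of_wolff_ne_top hp hW₀ (2 * t)) hmass
  rw [ENNReal.toReal_add (lintegral_ball_ne_top_of_wolff_ne_top hp hW₀ t) (by finiteness),
    ENNReal.toReal_mul, ENNReal.toReal_mul, ENNReal.toReal_ofReal hL,
    ENNReal.toReal_ofReal (by positivity)] at this
  have htδ : t ^ (n + a - q * σ) = t ^ (a - q * σ) * t ^ n := by
    rw [← Real.rpow_natCast, ← Real.rpow_add ht]
    ring_nf
  calc _ = ballMass f t + L * (t ^ n * v) := by rw [htδ]; ring
    _ ≤ _ := this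

end IsIESolutionWith

theorem stmt0_no_positive_solution_general
    (n : ℕ) (p β a q : ℝ)
    (hp1 : 1 < p)
    (ha0 : 0 ≤ -a) (ha : -a < p * β) (hβn : p * β < n)
    (hq0 : 0 < q) (hq : q ≤ (n + a) * (p - 1) / (n - p * β)) :
    ¬ ∃ (R u : EuclideanSpace ℝ (Fin n) → ℝ),
        DoubleBounded R ∧ IsIESolutionWith n β p a q R u := by
  rintro ⟨R, u, ⟨C, hC, hR⟩, hsol⟩
  have : NeZero n := ⟨by rintro rfl; simp at hβn; linarith⟩
  set m : ℝ := n - p * β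
  have hm : 0 < m := by linarith
  set δ := n + a - q * (m / (p - 1))
  have hδ : 0 ≤ δ := by
    rw [le_div_iff₀ hm] at hq
    rw [sub_nonneg, mul_div_assoc', div_le_iff₀ (by linarith)]
    linarith
  have hγ : δ + m * (q / (p - 1) - 1) = a + p * β := by ring
  obtain ⟨T, hT, hgT⟩ := hsol.exists_pos_ballMass_pos hp1
  obtain ⟨c, hc, hrec⟩ := hsol.exists_ballMass_add_le_ballMass_two_mul hC (fun x => (hR x).1) hp1
    hβn.le (by linarith) hq0.le
  refine (hsol.2.2 0).1 (wolff_zero_eq_top_of_frequently_pow_le_ballMass hp1 hβn.le hT ?_)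
  refine frequently_pow_le_of_add_mul_pow_mul_rpow_le (c := c * T ^ δ) (A := 2 ^ δ)
    (θ := q / (p - 1)) (by positivity) (Real.one_le_rpow one_le_two hδ) (by positivity) ?_
    (by simpa using hgT) fun k => ?_
  · rw [← Real.rpow_mul zero_le_two, ← Real.rpow_add two_pos, hγ]
    exact Real.one_lt_rpow one_lt_two (by linarith)
  · have := hrec (2 ^ k * T) (by positivity)
    rw [show 2 * (2 ^ k * T) = 2 ^ (k + 1) * T by ring, Real.mul_rpow (by positivity) hT.le,
      ← Real.rpow_pow_comm zero_le_two] at this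
    convert this using 2
    ring

/-- nonexistence of positive solutions of the integral equation
when `q ∈ (0, (n+a)(p-1)/(n-pβ)]`. -/
theorem stmt0_no_positive_solution
    (n : ℕ) (hn : 3 ≤ n) (p β a q : ℝ)
    (hp1 : 1 < p) (hp2 : p ≤ 2) (hβ : 0 < β)
    (ha0 : 0 ≤ -a) (ha : -a < p * β) (hβn : p * β < n)
    (hq0 : 0 < q) (hq : q ≤ (n + a) * (p - 1) / (n - p * β)) :
    ¬ ∃ (R u : EuclideanSpace ℝ (Fin n) → ℝ),
        DoubleBounded R ∧ IsIESolutionWith n β p a q R u :=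
  stmt0_no_positive_solution_general n p β a q hp1 ha0 ha hβn hq0 hq
end

section
/- Assume n ≥ 3, p ∈ (1,2], q > p−1, β > 0, 0 ≤ −a < pβ < n, and let s₀ = n(q−p+1)/(pβ+a). Let r₀ ∈ [s₀, ∞) and let u be a positive solution of the integral equation (IE) which is bounded on ℝ^n but does not belong to L^{r₀}(ℝ^n). If the limit lim_{|x|→∞} u(x)|x|^θ exists and lies in (0,∞) for some θ ∈ ℝ, then θ = (pβ+a)/(q−p+1). -/
open MeasureTheory Metric Set Filter ENNReal

/-!
If `u(x) ≈ L |x|^{-θ}` at infinity, then on `B_{|x|/2}(x)` the integrand `|y|^a u(y)^q` is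
`≳ |x|^{a-θq}`, and the radii `t ∈ (|x|/2, |x|)` of the Wolff potential alone give
`u(x) ≳ |x|^{(pβ+a-θq)/(p-1)}`; comparing with `u(x) ≲ |x|^{-θ}` forces
`pβ+a ≤ θ(q-p+1)`. Conversely, if `θ(q-p+1) > pβ+a` then `θ r₀ ≥ θ s₀ > n`, so
`u^{r₀} ≲ (1+|x|)^{-θ r₀}` at infinity is integrable, contradicting `u ∉ L^{r₀}`.
-/

open Asymptotics Bornology Topology

theorem min_rpow_mul_rpow_le_rpow {c d m t e : ℝ} (hc : 0 < c) (hm : 0 < m)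
    (hct : c * m ≤ t) (htd : t ≤ d * m) : min (c ^ e) (d ^ e) * m ^ e ≤ t ^ e := by
  rcases le_total 0 e with he | he
  · calc min (c ^ e) (d ^ e) * m ^ e ≤ c ^ e * m ^ e := by gcongr; exact min_le_left _ _
      _ = (c * m) ^ e := (Real.mul_rpow hc.le hm.le).symm
      _ ≤ t ^ e := Real.rpow_le_rpow (by positivity) hct he
  · calc min (c ^ e) (d ^ e) * m ^ e ≤ d ^ e * m ^ e := by gcongr; exact min_le_right _ _
      _ = (d * m) ^ e := (Real.mul_rpow (by nlinarith [mul_pos hc hm]) hm.le).symm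
      _ ≤ t ^ e := Real.rpow_le_rpow_of_nonpos ((mul_pos hc hm).trans_le hct) htd he

section Cobounded

variable {E : Type*} [NormedAddCommGroup E]

theorem eventually_rpow_neg_le_and_le_of_tendsto_mul_rpow {u : E → ℝ} {θ L : ℝ}
    (hL : 0 < L) (h : Tendsto (fun x => u x * ‖x‖ ^ θ) (cobounded E) (𝓝 L)) :
    ∀ᶠ x in cobounded E, L / 2 * ‖x‖ ^ (-θ) ≤ u x ∧ u x ≤ 2 * L * ‖x‖ ^ (-θ) := by
  filter_upwards [h (Ioo_mem_nhds (by linarith : L / 2 < L) (by linarith : L < 2 * L)),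
    tendsto_norm_cobounded_atTop.eventually_gt_atTop 0] with x hx hx0
  have hθ : 0 < ‖x‖ ^ θ := Real.rpow_pos_of_pos hx0 θ
  rw [Real.rpow_neg hx0.le, ← div_eq_mul_inv, ← div_eq_mul_inv, div_le_iff₀ hθ, le_div_iff₀ hθ]
  exact ⟨hx.1.le, hx.2.le⟩

theorem le_of_eventually_mul_rpow_le_mul_rpow [(cobounded E).NeBot] {c C e e' : ℝ}
    (hc : 0 < c) (h : ∀ᶠ x in cobounded E, c * ‖x‖ ^ e ≤ C * ‖x‖ ^ e') : e ≤ e' := by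
  by_contra! he
  have hgrow : Tendsto (fun x : E => c * ‖x‖ ^ (e - e')) (cobounded E) atTop :=
    ((tendsto_rpow_atTop (sub_pos.2 he)).comp tendsto_norm_cobounded_atTop).const_mul_atTop hc
  obtain ⟨x, hx0, hxC, hxle⟩ := ((tendsto_norm_cobounded_atTop.eventually_gt_atTop 0).and
    ((hgrow.eventually_gt_atTop C).and h)).exists
  have hpos : 0 < ‖x‖ ^ e' := Real.rpow_pos_of_pos hx0 e'
  have : c * ‖x‖ ^ e = c * ‖x‖ ^ (e - e') * ‖x‖ ^ e' := by
    rw [mul_assoc, ← Real.rpow_add hx0, sub_add_cancel]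
  nlinarith

theorem isTheta_norm_one_add_norm : (fun x : E => ‖x‖) =Θ[cobounded E] (fun x => 1 + ‖x‖) :=
  (isLittleO_one_left_iff ℝ |>.2 <| by
    simpa only [norm_norm] using tendsto_norm_cobounded_atTop).right_isTheta_add

end Cobounded

section Decay

variable {E F : Type*} [NormedAddCommGroup E] [NormedSpace ℝ E] [FiniteDimensional ℝ E]
  [MeasurableSpace E] [BorelSpace E] [NormedAddCommGroup F]

theorem memLp_of_isBigO_norm_rpow_neg (μ : Measure E) [μ.IsAddHaarMeasure] {u : E → F}
    (hu : Continuous u) {θ r : ℝ} (hr : 0 < r) (hθr : (Module.finrank ℝ E : ℝ) < θ * r)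
    (hdecay : u =O[cobounded E] fun x => ‖x‖ ^ (-θ)) : MemLp u (ENNReal.ofReal r) μ := by
  rw [← integrable_norm_rpow_iff hu.aestronglyMeasurable (by simpa using hr) ofReal_ne_top,
    toReal_ofReal hr.le]
  have hnonneg : ∀ᶠ x in cobounded E, 0 ≤ (1 + ‖x‖) ^ (-θ) :=
    Eventually.of_forall fun x => by positivity
  have hO : (fun x => ‖u x‖ ^ r) =O[cocompact E] fun x => (1 + ‖x‖) ^ (-(θ * r)) := by
    rw [← Metric.cobounded_eq_cocompact]
    refine ((hdecay.trans (isTheta_norm_one_add_norm.rpow ?_ ?_).isBigO).norm_left.rpow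
      hr.le hnonneg).congr_right fun x => ?_
    · exact Eventually.of_forall fun x => norm_nonneg x
    · exact Eventually.of_forall fun x => by positivity
    · rw [← Real.rpow_mul (by positivity), neg_mul]
  exact (hu.norm.rpow_const fun _ => Or.inr hr.le).locallyIntegrable
    |>.integrable_of_isBigO_cocompact hO ((integrable_one_add_norm hθr).integrableAtFilter _)

end Decay

theorem exists_pos_ofReal_mul_rpow_le_wolff (n : ℕ) (β : ℝ) {p : ℝ} (hp : 1 < p) :
    ∃ c > 0, ∀ (f : EuclideanSpace ℝ (Fin n) → ℝ) (x : EuclideanSpace ℝ (Fin n)) (r K : ℝ),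
      0 < r → 0 ≤ K → (∀ y ∈ ball x r, K ≤ f y) →
      ENNReal.ofReal (c * (K * r ^ (p * β)) ^ (1 / (p - 1))) ≤ wolff n β p f x := by
  set e : ℝ := p * β - n
  set V : ℝ := (volume (ball (0 : EuclideanSpace ℝ (Fin n)) 1)).toReal
  set κ : ℝ := min (1 ^ e) (2 ^ e)
  have hV : 0 < V := ENNReal.toReal_pos (measure_ball_pos _ _ one_pos).ne' measure_ball_lt_top.ne
  have hκ : 0 < κ := lt_min (by positivity) (by positivity)
  have hexp : 0 ≤ 1 / (p - 1) := by have := sub_pos.2 hp; positivity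
  refine ⟨(κ * V) ^ (1 / (p - 1)) / 2, by positivity, fun f x r K hr hK hf => ?_⟩
  set X : ℝ := (κ * V * (K * r ^ (p * β))) ^ (1 / (p - 1))
  have hintegrand : ∀ t ∈ Ioo r (2 * r), ENNReal.ofReal X / ENNReal.ofReal (2 * r) ≤
      (ENNReal.ofReal (t ^ e) * ∫⁻ y in ball x t, ENNReal.ofReal (f y)) ^ (1 / (p - 1)) /
        ENNReal.ofReal t := by
    rintro t ⟨hrt, ht2r⟩
    have hball : ENNReal.ofReal (K * (r ^ n * V)) ≤ ∫⁻ y in ball x t, ENNReal.ofReal (f y) :=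
      calc ENNReal.ofReal (K * (r ^ n * V)) = ∫⁻ _ in ball x r, ENNReal.ofReal K := by
            rw [setLIntegral_const, Measure.addHaar_ball_of_pos _ _ hr,
              finrank_euclideanSpace_fin, ENNReal.ofReal_mul hK, ENNReal.ofReal_mul (by positivity),
              ENNReal.ofReal_toReal measure_ball_lt_top.ne, mul_comm (ENNReal.ofReal K)]
        _ ≤ ∫⁻ y in ball x r, ENNReal.ofReal (f y) :=
            setLIntegral_mono' measurableSet_ball fun y hy => ENNReal.ofReal_le_ofReal (hf y hy)
        _ ≤ ∫⁻ y in ball x t, ENNReal.ofReal (f y) := lintegral_mono_set (ball_subset_ball hrt.le)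
    have hpow : κ * r ^ e ≤ t ^ e :=
      min_rpow_mul_rpow_le_rpow one_pos hr (by linarith) ht2r.le
    have hprod : κ * V * (K * r ^ (p * β)) = κ * r ^ e * (K * (r ^ n * V)) := by
      rw [← Real.rpow_natCast, show p * β = e + n by ring, Real.rpow_add hr]
      ring
    gcongr
    rw [← ENNReal.ofReal_rpow_of_nonneg (by positivity) hexp, hprod,
      ENNReal.ofReal_mul (by positivity)]
    gcongr
  calc ENNReal.ofReal ((κ * V) ^ (1 / (p - 1)) / 2 * (K * r ^ (p * β)) ^ (1 / (p - 1)))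
      = ENNReal.ofReal X / ENNReal.ofReal (2 * r) * volume (Ioo r (2 * r)) := by
        have hX : X = (κ * V) ^ (1 / (p - 1)) * (K * r ^ (p * β)) ^ (1 / (p - 1)) :=
          Real.mul_rpow (by positivity) (by positivity)
        rw [Real.volume_Ioo, ← ENNReal.ofReal_div_of_pos (by positivity),
          ← ENNReal.ofReal_mul (by positivity), hX]
        congr 1
        field_simp
        ring
    _ = ∫⁻ _ in Ioo r (2 * r), ENNReal.ofReal X / ENNReal.ofReal (2 * r) :=
        (setLIntegral_const _ _).symm
    _ ≤ ∫⁻ t in Ioo r (2 * r),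
          (ENNReal.ofReal (t ^ e) * ∫⁻ y in ball x t, ENNReal.ofReal (f y)) ^ (1 / (p - 1)) /
            ENNReal.ofReal t :=
        setLIntegral_mono' measurableSet_Ioo hintegrand
    _ ≤ wolff n β p f x := lintegral_mono_set fun t ht => hr.trans ht.1

namespace IsIESolutionWith

variable {n : ℕ} {β p a q : ℝ} {R u : EuclideanSpace ℝ (Fin n) → ℝ}

theorem exists_pos_mul_le_of_ofReal_le_wolff (hsol : IsIESolutionWith n β p a q R u)
    (hR : DoubleBounded R) :
    ∃ c > 0, ∀ x (s : ℝ),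
      ENNReal.ofReal s ≤ wolff n β p (fun y => ‖y‖ ^ a * u y ^ q) x → c * s ≤ u x := by
  obtain ⟨C, hC, hRC⟩ := hR
  refine ⟨1 / C, by positivity, fun x s hs => ?_⟩
  obtain ⟨hfin, hux⟩ := hsol.2.2 x
  rw [hux]
  calc 1 / C * s ≤ 1 / C * (wolff n β p (fun y => ‖y‖ ^ a * u y ^ q) x).toReal := by
        gcongr
        exact (ENNReal.ofReal_le_iff_le_toReal hfin).1 hs
    _ ≤ R x * (wolff n β p (fun y => ‖y‖ ^ a * u y ^ q) x).toReal := by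
        gcongr
        exact (hRC x).1

theorem exists_pos_mul_norm_rpow_le (hsol : IsIESolutionWith n β p a q R u)
    (hR : DoubleBounded R) (hp : 1 < p) (hq : 0 ≤ q) {b θ : ℝ} (hb : 0 < b)
    (hlow : ∀ᶠ x in cobounded _, b * ‖x‖ ^ (-θ) ≤ u x) :
    ∃ c > 0, ∀ᶠ x in cobounded _, c * ‖x‖ ^ ((p * β + a - θ * q) / (p - 1)) ≤ u x := by
  obtain ⟨M, -, hM⟩ := hasBasis_cobounded_norm.eventually_iff.1 hlow
  obtain ⟨cW, hcW, hW⟩ := exists_pos_ofReal_mul_rpow_le_wolff n β hp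
  obtain ⟨cR, hcR, hR⟩ := hsol.exists_pos_mul_le_of_ofReal_le_wolff hR
  set κ : ℝ := min ((1 / 2) ^ (a - θ * q)) ((3 / 2) ^ (a - θ * q))
  have hκ : 0 < κ := lt_min (by positivity) (by positivity)
  set A : ℝ := b ^ q * κ * (1 / 2) ^ (p * β)
  refine ⟨cR * (cW * A ^ (1 / (p - 1))), by positivity, ?_⟩
  filter_upwards [tendsto_norm_cobounded_atTop.eventually_ge_atTop (max (2 * M) 1)] with x hx
  set m := ‖x‖
  have hm : 0 < m := by linarith [le_max_right (2 * M) 1]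
  have hball : ∀ y ∈ ball x (m / 2), b ^ q * κ * m ^ (a - θ * q) ≤ ‖y‖ ^ a * u y ^ q := by
    intro y hy
    rw [mem_ball, dist_eq_norm] at hy
    have hy₁ : 1 / 2 * m ≤ ‖y‖ := by linarith [norm_sub_norm_le x y, norm_sub_rev x y]
    have hy₂ : ‖y‖ ≤ 3 / 2 * m := by linarith [norm_sub_norm_le y x]
    have hy : 0 < ‖y‖ := by linarith
    calc b ^ q * κ * m ^ (a - θ * q) ≤ b ^ q * ‖y‖ ^ (a - θ * q) := by
          rw [mul_assoc]
          gcongr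
          exact min_rpow_mul_rpow_le_rpow (by norm_num) hm hy₁ hy₂
      _ = ‖y‖ ^ a * (b * ‖y‖ ^ (-θ)) ^ q := by
          rw [Real.mul_rpow hb.le (by positivity), ← Real.rpow_mul hy.le,
            sub_eq_add_neg, Real.rpow_add hy, neg_mul]
          ring
      _ ≤ ‖y‖ ^ a * u y ^ q := by
          gcongr
          exact hM (show M ≤ ‖y‖ by linarith [le_max_left (2 * M) 1])
  have hrate : (b ^ q * κ * m ^ (a - θ * q) * (m / 2) ^ (p * β)) ^ (1 / (p - 1)) =
      A ^ (1 / (p - 1)) * m ^ ((p * β + a - θ * q) / (p - 1)) := by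
    have hinner : b ^ q * κ * m ^ (a - θ * q) * (m / 2) ^ (p * β) =
        A * m ^ (p * β + a - θ * q) := by
      rw [show p * β + a - θ * q = (a - θ * q) + p * β by ring, Real.rpow_add hm,
        div_eq_mul_one_div m, Real.mul_rpow hm.le (by norm_num)]
      ring
    rw [hinner, Real.mul_rpow (by positivity) (by positivity), ← Real.rpow_mul hm.le,
      div_eq_mul_one_div (p * β + a - θ * q)]
  have hux := hR x _ (hW _ x (m / 2) _ (by positivity) (by positivity) hball)
  rw [hrate] at hux
  linarith

end IsIESolutionWith

theorem stmt1_slow_decay_rate_general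
    (n : ℕ) (hn : 3 ≤ n) (p β a q : ℝ)
    (hp1 : 1 < p)
    (ha : -a < p * β)
    (hq1 : p - 1 < q)
    (R u : EuclideanSpace ℝ (Fin n) → ℝ)
    (hR : DoubleBounded R) (hu : IsIESolutionWith n β p a q R u)
    (r₀ : ℝ) (hr₀ : n * (q - p + 1) / (p * β + a) ≤ r₀)
    (hnotLr : ¬ MemLp u (ENNReal.ofReal r₀) volume)
    (θ : ℝ)
    (hlim : ∃ L : ℝ, 0 < L ∧
      Tendsto (fun x : EuclideanSpace ℝ (Fin n) => u x * ‖x‖ ^ θ)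
        (Bornology.cobounded (EuclideanSpace ℝ (Fin n))) (nhds L)) :
    θ = (p * β + a) / (q - p + 1) := by
  obtain ⟨L, hL, hlim⟩ := hlim
  have : Nonempty (Fin n) := ⟨⟨0, by omega⟩⟩
  have hn₀ : (0 : ℝ) < n := by exact_mod_cast (by omega : 0 < n)
  have hqp : 0 < q - p + 1 := by linarith
  have hpβa : 0 < p * β + a := by linarith
  have hbounds := eventually_rpow_neg_le_and_le_of_tendsto_mul_rpow hL hlim
  have hslow_le : p * β + a ≤ θ * (q - p + 1) := by
    obtain ⟨c, hc, hlow⟩ := hu.exists_pos_mul_norm_rpow_le hR hp1 (by linarith) (half_pos hL)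
      (hbounds.mono fun _ hx => hx.1)
    have hrate := le_of_eventually_mul_rpow_le_mul_rpow hc
      ((hlow.and hbounds).mono fun _ hx => hx.1.trans hx.2.2)
    rw [div_le_iff₀ (by linarith)] at hrate
    linarith
  have hle_slow : θ * (q - p + 1) ≤ p * β + a := by
    by_contra! hfast
    have hθ : 0 < θ := pos_of_mul_pos_left (hpβa.trans hfast) hqp.le
    have hθs₀ : (n : ℝ) < θ * (n * (q - p + 1) / (p * β + a)) := by
      rw [mul_div_assoc', lt_div_iff₀ hpβa]
      linarith [mul_lt_mul_of_pos_left hfast hn₀]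
    have hdecay : u =O[cobounded _] fun x => ‖x‖ ^ (-θ) := by
      refine IsBigO.of_bound (2 * L) (hbounds.mono fun x hx => ?_)
      rw [Real.norm_of_nonneg (hu.2.1 x).le, Real.norm_of_nonneg (by positivity)]
      exact hx.2
    refine hnotLr (memLp_of_isBigO_norm_rpow_neg volume hu.1
      ((by positivity : (0 : ℝ) < n * (q - p + 1) / (p * β + a)).trans_le hr₀) ?_ hdecay)
    rw [finrank_euclideanSpace_fin]
    linarith [mul_le_mul_of_nonneg_left hr₀ hθ.le]
  rw [eq_div_iff hqp.ne']
  linarith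

/-- a bounded positive solution of the integral equation which is not in
`L^{r₀}(ℝⁿ)` (for some `r₀ ≥ s₀`) and decays exactly with some rate `θ` must decay with
the slow rate `(pβ+a)/(q-p+1)`. -/
theorem stmt1_slow_decay_rate
    (n : ℕ) (hn : 3 ≤ n) (p β a q : ℝ)
    (hp1 : 1 < p) (hp2 : p ≤ 2) (hβ : 0 < β)
    (ha0 : 0 ≤ -a) (ha : -a < p * β) (hβn : p * β < n)
    (hq1 : p - 1 < q)
    (R u : EuclideanSpace ℝ (Fin n) → ℝ)
    (hR : DoubleBounded R) (hu : IsIESolutionWith n β p a q R u)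
    (r₀ : ℝ) (hr₀ : n * (q - p + 1) / (p * β + a) ≤ r₀)
    (hbdd : ∃ C : ℝ, ∀ x, u x ≤ C)
    (hnotLr : ¬ MemLp u (ENNReal.ofReal r₀) volume)
    (θ : ℝ)
    (hlim : ∃ L : ℝ, 0 < L ∧
      Tendsto (fun x : EuclideanSpace ℝ (Fin n) => u x * ‖x‖ ^ θ)
        (Bornology.cobounded (EuclideanSpace ℝ (Fin n))) (nhds L)) :
    θ = (p * β + a) / (q - p + 1) :=
  stmt1_slow_decay_rate_general n hn p β a q hp1 ha hq1 R u hR hu r₀ hr₀ hnotLr θ hlim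
end

section
/- Assume n ≥ 3, p ∈ (1,2], q > p−1, β > 0, 0 ≤ −a < pβ < n, and q > (n+a)(p−1)/(n−pβ). Let u be a positive solution of the integral equation (IE) which is radially symmetric and radially decreasing about the origin. Then there exists C > 0 such that u(x) ≤ C|x|^{−(pβ+a)/(q−p+1)} for all x ≠ 0. -/
/-!
For `r = ‖x‖` and `t ∈ (2r, 4r)` the ball `B_t(x)` contains `B_r(0)`, on which
`|y|^a u(y)^q ≥ r^a u(x)^q` because `a ≤ 0` and `u` is radially decreasing. Integrating over
`t ∈ (2r, 4r)` gives `W(x) ≳ r^{(pβ+a)/(p-1)} u(x)^{q/(p-1)}`, and `u ≳ W` since `R` is bounded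
below. As `q/(p-1) > 1`, this inequality can be solved for `u(x)`.
-/

open MeasureTheory Metric Set Filter ENNReal

theorem ofReal_mul_measure_le_setLIntegral_of_le_of_ne {α : Type*} [MeasurableSpace α]
    {μ : Measure α} [NullSingletonClass μ] {s : Set α} (hs : MeasurableSet s) {f : α → ℝ}
    {c : ℝ} (z : α) (hf : ∀ y ∈ s, y ≠ z → c ≤ f y) :
    ENNReal.ofReal c * μ s ≤ ∫⁻ y in s, ENNReal.ofReal (f y) ∂μ := by
  rw [← setLIntegral_const]
  refine setLIntegral_mono_ae' hs ?_
  filter_upwards [μ.ae_ne z] with y hyz hys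
  exact ENNReal.ofReal_le_ofReal (hf y hys hyz)

theorem ofReal_mul_measure_ball_le_setLIntegral_of_antitone_norm
    {E : Type*} [NormedAddCommGroup E] [MeasurableSpace E] [OpensMeasurableSpace E]
    {μ : Measure E} [NullSingletonClass μ] {u : E → ℝ} {a q : ℝ} (ha : a ≤ 0) (hq : 0 ≤ q)
    {x : E} (hux : 0 ≤ u x) (hrad : ∀ y, ‖y‖ ≤ ‖x‖ → u x ≤ u y) {t : ℝ} (ht : 2 * ‖x‖ ≤ t) :
    ENNReal.ofReal (‖x‖ ^ a * u x ^ q) * μ (ball 0 ‖x‖) ≤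
      ∫⁻ y in ball x t, ENNReal.ofReal (‖y‖ ^ a * u y ^ q) ∂μ := by
  have hsub : ball (0 : E) ‖x‖ ⊆ ball x t :=
    ball_subset_ball' (by rw [dist_zero_left]; linarith)
  refine (ofReal_mul_measure_le_setLIntegral_of_le_of_ne measurableSet_ball 0
    fun y hy hy0 => ?_).trans (lintegral_mono_set hsub)
  have hyx : ‖y‖ ≤ ‖x‖ := (mem_ball_zero_iff.1 hy).le
  exact mul_le_mul (Real.rpow_le_rpow_of_nonpos (norm_pos_iff.2 hy0) hyx ha)
    (Real.rpow_le_rpow hux (hrad y hyx) hq) (Real.rpow_nonneg hux q)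
    (Real.rpow_nonneg (norm_nonneg y) a)

theorem ofReal_le_wolff_of_ofReal_le_setLIntegral_ball {n : ℕ} {β p : ℝ}
    (f : EuclideanSpace ℝ (Fin n) → ℝ) (x : EuclideanSpace ℝ (Fin n)) {s M : ℝ}
    (hp : 1 < p) (hpβ : p * β ≤ n) (hs : 0 < s) (hM : 0 ≤ M)
    (hball : ∀ t ∈ Ioo s (2 * s), ENNReal.ofReal M ≤ ∫⁻ y in ball x t, ENNReal.ofReal (f y)) :
    ENNReal.ofReal (((2 * s) ^ (p * β - n) * M) ^ (1 / (p - 1)) / 2) ≤ wolff n β p f x := by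
  set K : ℝ := ((2 * s) ^ (p * β - n) * M) ^ (1 / (p - 1)) with hK_def
  have he : 0 ≤ 1 / (p - 1) := one_div_nonneg.2 (by linarith)
  have hK : 0 ≤ K := by positivity
  calc ENNReal.ofReal (K / 2)
      = ∫⁻ _ in Ioo s (2 * s), ENNReal.ofReal K / ENNReal.ofReal (2 * s) := by
        rw [setLIntegral_const, Real.volume_Ioo, ← ENNReal.ofReal_div_of_pos (by positivity),
          ← ENNReal.ofReal_mul (by positivity)]
        congr 1
        field_simp
        ring
    _ ≤ ∫⁻ t in Ioo s (2 * s), (ENNReal.ofReal (t ^ (p * β - n)) *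
          ∫⁻ y in ball x t, ENNReal.ofReal (f y)) ^ (1 / (p - 1)) / ENNReal.ofReal t := by
        refine setLIntegral_mono' measurableSet_Ioo fun t ht => ?_
        have ht0 : 0 < t := hs.trans ht.1
        refine ENNReal.div_le_div ?_ (ENNReal.ofReal_le_ofReal ht.2.le)
        rw [hK_def, ← ENNReal.ofReal_rpow_of_nonneg (by positivity) he,
          ENNReal.ofReal_mul (by positivity)]
        refine ENNReal.rpow_le_rpow (mul_le_mul' ?_ (hball t ht)) he
        exact ENNReal.ofReal_le_ofReal
          (Real.rpow_le_rpow_of_nonpos ht0 ht.2.le (by linarith))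
    _ ≤ wolff n β p f x := lintegral_mono_set fun t ht => hs.trans ht.1

theorem ofReal_mul_rpow_le_wolff_of_antitone_norm {n : ℕ} [NeZero n] {β p a q : ℝ}
    (hp : 1 < p) (hpβ : p * β ≤ n) (ha : a ≤ 0) (hq : 0 ≤ q)
    {u : EuclideanSpace ℝ (Fin n) → ℝ} {x : EuclideanSpace ℝ (Fin n)} (hx : x ≠ 0)
    (hux : 0 < u x) (hrad : ∀ y, ‖y‖ ≤ ‖x‖ → u x ≤ u y) :
    ENNReal.ofReal
        (((4 : ℝ) ^ (p * β - n) * volume.real (ball (0 : EuclideanSpace ℝ (Fin n)) 1)) ^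
            (1 / (p - 1)) / 2 * ‖x‖ ^ ((p * β + a) / (p - 1)) * u x ^ (q / (p - 1))) ≤
      wolff n β p (fun y => ‖y‖ ^ a * u y ^ q) x := by
  set V := volume.real (ball (0 : EuclideanSpace ℝ (Fin n)) 1)
  set r := ‖x‖
  have hr : 0 < r := norm_pos_iff.2 hx
  have hV : 0 ≤ V := measureReal_nonneg
  have hball : ∀ t ∈ Ioo (2 * r) (2 * (2 * r)),
      ENNReal.ofReal (r ^ a * u x ^ q * (r ^ n * V)) ≤
        ∫⁻ y in ball x t, ENNReal.ofReal (‖y‖ ^ a * u y ^ q) := by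
    intro t ht
    have hvol : volume (ball (0 : EuclideanSpace ℝ (Fin n)) r) = ENNReal.ofReal (r ^ n * V) := by
      rw [Measure.addHaar_ball _ _ hr.le, finrank_euclideanSpace_fin,
        ENNReal.ofReal_mul (by positivity), ofReal_measureReal]
    rw [ENNReal.ofReal_mul (by positivity), ← hvol]
    exact ofReal_mul_measure_ball_le_setLIntegral_of_antitone_norm ha hq hux.le hrad ht.1.le
  refine le_of_eq_of_le ?_ (ofReal_le_wolff_of_ofReal_le_setLIntegral_ball _ x hp hpβ
    (by positivity) (by positivity) hball)
  congr 1
  have hbase : (2 * (2 * r)) ^ (p * β - n) * (r ^ a * u x ^ q * (r ^ n * V)) =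
      (4 ^ (p * β - n) * V) * r ^ (p * β + a) * u x ^ q := by
    rw [show 2 * (2 * r) = 4 * r by ring, Real.mul_rpow (by norm_num) hr.le,
      ← Real.rpow_natCast, show p * β + a = (p * β - n) + a + n by ring,
      Real.rpow_add hr, Real.rpow_add hr]
    ring
  rw [hbase, Real.mul_rpow (x := 4 ^ (p * β - n) * V * r ^ (p * β + a)) (by positivity)
      (by positivity),
    Real.mul_rpow (x := 4 ^ (p * β - n) * V) (by positivity) (by positivity),
    ← Real.rpow_mul hr.le, ← Real.rpow_mul hux.le]
  field_simp

theorem IsIESolutionWith.wolff_le_ofReal_mul {n : ℕ} {β p a q : ℝ}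
    {R u : EuclideanSpace ℝ (Fin n) → ℝ} (hu : IsIESolutionWith n β p a q R u)
    (hR : DoubleBounded R) :
    ∃ C > 0, ∀ x, wolff n β p (fun y => ‖y‖ ^ a * u y ^ q) x ≤ ENNReal.ofReal (C * u x) := by
  obtain ⟨C, hC, hRC⟩ := hR
  refine ⟨C, hC, fun x => ?_⟩
  obtain ⟨hfin, hux⟩ := hu.2.2 x
  rw [← ENNReal.ofReal_toReal hfin]
  refine ENNReal.ofReal_le_ofReal ?_
  rw [hux, ← mul_assoc]
  refine le_mul_of_one_le_left ENNReal.toReal_nonneg ?_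
  have := mul_le_mul_of_nonneg_left (hRC x).1 hC.le
  rwa [mul_one_div_cancel hC.ne'] at this

theorem le_mul_rpow_of_mul_rpow_mul_rpow_le_self {c r u σ γ : ℝ} (hc : 0 < c) (hr : 0 < r)
    (hu : 0 < u) (hγ : 1 < γ) (h : c * r ^ σ * u ^ γ ≤ u) :
    u ≤ c ^ (-(γ - 1)⁻¹) * r ^ (-(σ / (γ - 1))) := by
  have hγ1 : 0 < γ - 1 := by linarith
  have hpow : u ^ (γ - 1) ≤ (c * r ^ σ)⁻¹ := by
    have hmul : c * r ^ σ * u ^ (γ - 1) * u ≤ 1 * u := by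
      rwa [mul_assoc _ (u ^ _), ← Real.rpow_add_one hu.ne', sub_add_cancel, one_mul]
    rw [inv_eq_one_div, le_div_iff₀ (by positivity), mul_comm]
    exact le_of_mul_le_mul_right hmul hu
  calc u = (u ^ (γ - 1)) ^ (γ - 1)⁻¹ := by
        rw [← Real.rpow_mul hu.le, mul_inv_cancel₀ hγ1.ne', Real.rpow_one]
    _ ≤ ((c * r ^ σ)⁻¹) ^ (γ - 1)⁻¹ := by gcongr
    _ = c ^ (-(γ - 1)⁻¹) * r ^ (-(σ / (γ - 1))) := by
        rw [Real.inv_rpow (by positivity), Real.mul_rpow hc.le (by positivity),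
          ← Real.rpow_mul hr.le, Real.rpow_neg hc.le, Real.rpow_neg hr.le, mul_inv,
          div_eq_mul_inv]

theorem stmt3_radial_slow_decay_bound_general
    (n : ℕ) (hn : 3 ≤ n) (p β a q : ℝ)
    (hp1 : 1 < p)
    (ha0 : 0 ≤ -a) (hβn : p * β < n)
    (hq1 : p - 1 < q)
    (R u : EuclideanSpace ℝ (Fin n) → ℝ)
    (hR : DoubleBounded R) (hu : IsIESolutionWith n β p a q R u)
    (hrad : ∀ x y : EuclideanSpace ℝ (Fin n), ‖x‖ ≤ ‖y‖ → u y ≤ u x) :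
    ∃ C : ℝ, 0 < C ∧ ∀ x : EuclideanSpace ℝ (Fin n), x ≠ 0 →
      u x ≤ C * ‖x‖ ^ (-((p * β + a) / (q - p + 1))) := by
  have : NeZero n := ⟨by omega⟩
  obtain ⟨C, hC, hWu⟩ := hu.wolff_le_ofReal_mul hR
  have hp0 : 0 < p - 1 := by linarith
  have hV : 0 < volume.real (ball (0 : EuclideanSpace ℝ (Fin n)) 1) :=
    ENNReal.toReal_pos (measure_ball_pos volume 0 one_pos).ne' measure_ball_lt_top.ne
  set L := ((4 : ℝ) ^ (p * β - n) * volume.real (ball (0 : EuclideanSpace ℝ (Fin n)) 1)) ^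
    (1 / (p - 1)) / 2
  have hL : 0 < L := by positivity
  refine ⟨(L / C) ^ (-(q / (p - 1) - 1)⁻¹), by positivity, fun x hx => ?_⟩
  have hlow := (ofReal_mul_rpow_le_wolff_of_antitone_norm hp1 hβn.le (by linarith)
    (by linarith) hx (hu.2.1 x) fun y hy => hrad y x hy).trans (hWu x)
  rw [ENNReal.ofReal_le_ofReal_iff (by nlinarith [hu.2.1 x])] at hlow
  have hbound := le_mul_rpow_of_mul_rpow_mul_rpow_le_self
    (σ := (p * β + a) / (p - 1)) (γ := q / (p - 1)) (div_pos hL hC) (norm_pos_iff.2 hx)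
    (hu.2.1 x) ((one_lt_div hp0).2 hq1) (by
      rw [div_mul_eq_mul_div, div_mul_eq_mul_div, div_le_iff₀ hC, mul_comm (u x)]
      exact hlow)
  convert hbound using 3
  field_simp
  ring

/-- a radially symmetric decreasing positive solution of the integral
equation satisfies `u(x) ≤ C|x|^{-(pβ+a)/(q-p+1)}` for `x ≠ 0`. -/
theorem stmt3_radial_slow_decay_bound
    (n : ℕ) (hn : 3 ≤ n) (p β a q : ℝ)
    (hp1 : 1 < p) (hp2 : p ≤ 2) (hβ : 0 < β)
    (ha0 : 0 ≤ -a) (ha : -a < p * β) (hβn : p * β < n)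
    (hq1 : p - 1 < q) (hq2 : (n + a) * (p - 1) / (n - p * β) < q)
    (R u : EuclideanSpace ℝ (Fin n) → ℝ)
    (hR : DoubleBounded R) (hu : IsIESolutionWith n β p a q R u)
    (hrad : ∀ x y : EuclideanSpace ℝ (Fin n), ‖x‖ ≤ ‖y‖ → u y ≤ u x) :
    ∃ C : ℝ, 0 < C ∧ ∀ x : EuclideanSpace ℝ (Fin n), x ≠ 0 →
      u x ≤ C * ‖x‖ ^ (-((p * β + a) / (q - p + 1))) :=
  stmt3_radial_slow_decay_bound_general n hn p β a q hp1 ha0 hβn hq1 R u hR hu hrad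
end

section
/- Let n ≥ 3, p ∈ (1,2], a ∈ ℝ with 0 ≤ −a < p < n, and q > (n+a)(p−1)/(n−p). Set t = (p+a)/(q−p+1) and c = t^{(p−1)/(q−p+1)} · (n−1−(p−1)(t+1))^{1/(q−p+1)}. Then n−1−(p−1)(t+1) > 0, and the function u(x) = c|x|^{−t} is a classical solution of the p-Laplace equation −div(|∇u|^{p−2}∇u) = |x|^a u^q on ℝ^n \ {0}; that is, for all x ≠ 0, −div(|∇u(x)|^{p−2}∇u(x)) = |x|^a u(x)^q. -/
open MeasureTheory Metric Set Filter

/-- The `p`-Laplacian `div(|∇u|^{p-2}∇u)` of `u`, computed as the trace of the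
(Fréchet) derivative of the vector field `y ↦ ‖∇u(y)‖^{p-2} • ∇u(y)`. -/
noncomputable def pLap (n : ℕ) (p : ℝ)
    (u : EuclideanSpace ℝ (Fin n) → ℝ) (x : EuclideanSpace ℝ (Fin n)) : ℝ :=
  LinearMap.trace ℝ (EuclideanSpace ℝ (Fin n))
    ((fderiv ℝ (fun y => ‖gradient u y‖ ^ (p - 2) • gradient u y) x).toLinearMap)

/-! For `u = c‖x‖^(-t)` one has `∇u = -ct‖x‖^(-t-2) x`, so the flux `|∇u|^(p-2) ∇u` is the
radial field `-(ct)^(p-1) ‖x‖^s x` with `s = -(t+1)(p-1) - 1`, and `y ↦ ‖y‖^s y` has divergence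
`(n + s)‖y‖^s`. Hence `-Δ_p u = (ct)^(p-1) (n-1-(p-1)(t+1)) ‖x‖^s`. The choice of `t` makes
`s = a - tq`, and the choice of `c` makes `c^(q-p+1) = t^(p-1) (n-1-(p-1)(t+1))`, i.e. the
coefficient equals `c^q`. Positivity comes from
`(n-1-(p-1)(t+1))(q-p+1) = q(n-p) - (n+a)(p-1)`. -/

section RadialCalculus

variable {E : Type*} [NormedAddCommGroup E] [InnerProductSpace ℝ E]

theorem hasFDerivAt_norm_rpow_of_ne_zero (r : ℝ) {x : E} (hx : x ≠ 0) :
    HasFDerivAt (fun y : E ↦ ‖y‖ ^ r) ((r * ‖x‖ ^ (r - 2)) • innerSL ℝ x) x := by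
  convert (hasStrictFDerivAt_norm_sq x).hasFDerivAt.rpow_const (p := r / 2) (by simp [hx])
    using 1
  · ext y
    rw [← Real.rpow_natCast_mul (norm_nonneg _)]
    ring_nf
  · rw [← Real.rpow_natCast_mul (norm_nonneg _), ← Nat.cast_smul_eq_nsmul ℝ, smul_smul]
    ring_nf

theorem gradient_const_mul_norm_rpow [CompleteSpace E] (c r : ℝ) {y : E} (hy : y ≠ 0) :
    gradient (fun z : E ↦ c * ‖z‖ ^ r) y = (c * r * ‖y‖ ^ (r - 2)) • y := by
  refine HasGradientAt.gradient ?_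
  rw [hasGradientAt_iff_hasFDerivAt]
  refine ((hasFDerivAt_norm_rpow_of_ne_zero r hy).const_mul c).congr_fderiv ?_
  ext w
  simp only [InnerProductSpace.toDual_apply_apply, smul_apply,
    innerSL_apply_apply, real_inner_smul_left, smul_eq_mul]
  ring

theorem trace_fderiv_mul_norm_rpow_smul [FiniteDimensional ℝ E] (k s : ℝ) {x : E}
    (hx : x ≠ 0) :
    LinearMap.trace ℝ E (fderiv ℝ (fun y : E ↦ (k * ‖y‖ ^ s) • y) x).toLinearMap
      = k * (Module.finrank ℝ E + s) * ‖x‖ ^ s := by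
  have hderiv : HasFDerivAt (fun y : E ↦ (k * ‖y‖ ^ s) • y) _ x :=
    ((hasFDerivAt_norm_rpow_of_ne_zero s hx).const_mul k).smul (hasFDerivAt_id x)
  rw [hderiv.fderiv, ContinuousLinearMap.toLinearMap_add, map_add,
    ContinuousLinearMap.toLinearMap_smul, map_smul, ContinuousLinearMap.coe_id,
    LinearMap.trace_id,
    show ∀ g : E →L[ℝ] ℝ, (g.smulRight x).toLinearMap = g.toLinearMap.smulRight x from
      fun _ ↦ rfl, LinearMap.trace_smulRight]
  simp only [ContinuousLinearMap.coe_coe, smul_apply, innerSL_apply_apply,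
    real_inner_self_eq_norm_sq, smul_eq_mul]
  have hnorm_pow : ‖x‖ ^ (s - 2) * ‖x‖ ^ 2 = ‖x‖ ^ s := by
    rw [← Real.rpow_natCast, ← Real.rpow_add (norm_pos_iff.2 hx)]
    norm_num
  linear_combination k * s * hnorm_pow

theorem norm_gradient_rpow_smul_gradient_const_mul_norm_rpow_neg [CompleteSpace E]
    {c t : ℝ} (hct : 0 < c * t) (p : ℝ) {y : E} (hy : y ≠ 0) :
    ‖gradient (fun z : E ↦ c * ‖z‖ ^ (-t)) y‖ ^ (p - 2) •
        gradient (fun z : E ↦ c * ‖z‖ ^ (-t)) y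
      = (-(c * t) ^ (p - 1) * ‖y‖ ^ (-(t + 1) * (p - 1) - 1)) • y := by
  have hy' : 0 < ‖y‖ := norm_pos_iff.2 hy
  have hcoeff : -(c * -t * ‖y‖ ^ (-t - 2)) = c * t * ‖y‖ ^ (-t - 2) := by ring
  have hcoeff_pos : 0 < c * t * ‖y‖ ^ (-t - 2) := mul_pos hct (Real.rpow_pos_of_pos hy' _)
  rw [gradient_const_mul_norm_rpow c (-t) hy, norm_smul, smul_smul, Real.norm_eq_abs,
    abs_of_neg (by linarith), hcoeff, Real.mul_rpow hcoeff_pos.le hy'.le,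
    Real.mul_rpow hct.le (Real.rpow_nonneg hy'.le _), ← Real.rpow_mul hy'.le]
  congr 1
  have hct_pow : (c * t) ^ (p - 1) = (c * t) ^ (p - 2) * (c * t) := by
    rw [← Real.rpow_add_one hct.ne']; ring_nf
  have hy_pow : ‖y‖ ^ (-(t + 1) * (p - 1) - 1)
      = ‖y‖ ^ ((-t - 2) * (p - 2)) * ‖y‖ ^ (p - 2) * ‖y‖ ^ (-t - 2) := by
    rw [← Real.rpow_add hy', ← Real.rpow_add hy']; ring_nf
  rw [hct_pow, hy_pow]
  ring

end RadialCalculus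

theorem pLap_const_mul_norm_rpow_neg {n : ℕ} {c t : ℝ} (hct : 0 < c * t) (p : ℝ)
    {x : EuclideanSpace ℝ (Fin n)} (hx : x ≠ 0) :
    pLap n p (fun y ↦ c * ‖y‖ ^ (-t)) x
      = -(c * t) ^ (p - 1) * (n - 1 - (p - 1) * (t + 1)) * ‖x‖ ^ (-(t + 1) * (p - 1) - 1) := by
  have hflux : (fun y ↦ ‖gradient (fun z ↦ c * ‖z‖ ^ (-t)) y‖ ^ (p - 2) •
        gradient (fun z ↦ c * ‖z‖ ^ (-t)) y)
      =ᶠ[nhds x] fun y ↦ (-(c * t) ^ (p - 1) * ‖y‖ ^ (-(t + 1) * (p - 1) - 1)) • y :=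
    eventually_ne_nhds hx |>.mono fun y hy ↦
      norm_gradient_rpow_smul_gradient_const_mul_norm_rpow_neg hct p hy
  rw [pLap, hflux.fderiv_eq, trace_fderiv_mul_norm_rpow_smul _ _ hx, finrank_euclideanSpace,
    Fintype.card_fin]
  ring

theorem sub_add_one_pos_of_lt {N p a q : ℝ} (hp1 : 1 < p) (hap : -a < p) (hpN : p < N)
    (hq : (N + a) * (p - 1) / (N - p) < q) : 0 < q - p + 1 := by
  have hNp : 0 < N - p := by linarith
  have : p - 1 < (N + a) * (p - 1) / (N - p) := by
    rw [lt_div_iff₀ hNp]; nlinarith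
  linarith

theorem sub_one_sub_mul_add_one_pos {N p a q : ℝ} (hp1 : 1 < p) (hap : -a < p) (hpN : p < N)
    (hq : (N + a) * (p - 1) / (N - p) < q) :
    0 < N - 1 - (p - 1) * ((p + a) / (q - p + 1) + 1) := by
  have hQ := sub_add_one_pos_of_lt hp1 hap hpN hq
  have hqN : (N + a) * (p - 1) < q * (N - p) := (div_lt_iff₀ (by linarith)).mp hq
  have : (N - 1 - (p - 1) * ((p + a) / (q - p + 1) + 1)) * (q - p + 1)
      = q * (N - p) - (N + a) * (p - 1) := by
    field_simp; ring
  exact pos_of_mul_pos_left (this ▸ sub_pos.2 hqN) hQ.le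

theorem rpow_div_mul_rpow_one_div_rpow {Q α t M : ℝ} (hQ : Q ≠ 0) (ht : 0 ≤ t) (hM : 0 ≤ M) :
    (t ^ (α / Q) * M ^ (1 / Q)) ^ Q = t ^ α * M := by
  rw [Real.mul_rpow (Real.rpow_nonneg ht _) (Real.rpow_nonneg hM _), ← Real.rpow_mul ht,
    ← Real.rpow_mul hM, div_mul_cancel₀ _ hQ, one_div_mul_cancel hQ, Real.rpow_one]

theorem stmt4_singular_solution_pLaplace_general
    (n : ℕ) (p a q t c : ℝ)
    (hp1 : 1 < p)
    (hap : -a < p) (hpn : p < (n : ℝ))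
    (hq : (n + a) * (p - 1) / (n - p) < q)
    (ht : t = (p + a) / (q - p + 1))
    (hc : c = t ^ ((p - 1) / (q - p + 1)) *
      ((n : ℝ) - 1 - (p - 1) * (t + 1)) ^ (1 / (q - p + 1))) :
    0 < (n : ℝ) - 1 - (p - 1) * (t + 1) ∧
    ∀ x : EuclideanSpace ℝ (Fin n), x ≠ 0 →
      -pLap n p (fun y => c * ‖y‖ ^ (-t)) x = ‖x‖ ^ a * (c * ‖x‖ ^ (-t)) ^ q := by
  have hQ := sub_add_one_pos_of_lt hp1 hap hpn hq
  have ht0 : 0 < t := ht ▸ div_pos (by linarith) hQ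
  have hM : 0 < (n : ℝ) - 1 - (p - 1) * (t + 1) :=
    ht ▸ sub_one_sub_mul_add_one_pos hp1 hap hpn hq
  have hc0 : 0 < c := hc ▸ mul_pos (Real.rpow_pos_of_pos ht0 _) (Real.rpow_pos_of_pos hM _)
  have hcQ : c ^ (q - p + 1) = t ^ (p - 1) * ((n : ℝ) - 1 - (p - 1) * (t + 1)) :=
    hc ▸ rpow_div_mul_rpow_one_div_rpow hQ.ne' ht0.le hM.le
  have hcq : c ^ q = (c * t) ^ (p - 1) * ((n : ℝ) - 1 - (p - 1) * (t + 1)) := by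
    rw [show q = (p - 1) + (q - p + 1) by ring, Real.rpow_add hc0, hcQ,
      Real.mul_rpow hc0.le ht0.le]
    ring
  have hexp : a + -t * q = -(t + 1) * (p - 1) - 1 := by
    rw [ht]; field_simp; ring
  refine ⟨hM, fun x hx ↦ ?_⟩
  have hx' : 0 < ‖x‖ := norm_pos_iff.2 hx
  rw [pLap_const_mul_norm_rpow_neg (mul_pos hc0 ht0) p hx, Real.mul_rpow hc0.le
    (Real.rpow_nonneg hx'.le _), ← Real.rpow_mul hx'.le, hcq, mul_left_comm, ← Real.rpow_add hx',
    hexp]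
  ring

/-- with the slow rate `t = (p+a)/(q-p+1)` and the explicit constant `c`,
one has `n-1-(p-1)(t+1) > 0` and `u(x) = c|x|^{-t}` is a classical solution of
`-div(|∇u|^{p-2}∇u) = |x|^a u^q` on `ℝⁿ \ {0}`. -/
theorem stmt4_singular_solution_pLaplace
    (n : ℕ) (hn : 3 ≤ n) (p a q t c : ℝ)
    (hp1 : 1 < p) (hp2 : p ≤ 2)
    (ha0 : 0 ≤ -a) (hap : -a < p) (hpn : p < (n : ℝ))
    (hq : (n + a) * (p - 1) / (n - p) < q)
    (ht : t = (p + a) / (q - p + 1))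
    (hc : c = t ^ ((p - 1) / (q - p + 1)) *
      ((n : ℝ) - 1 - (p - 1) * (t + 1)) ^ (1 / (q - p + 1))) :
    0 < (n : ℝ) - 1 - (p - 1) * (t + 1) ∧
    ∀ x : EuclideanSpace ℝ (Fin n), x ≠ 0 →
      -pLap n p (fun y => c * ‖y‖ ^ (-t)) x = ‖x‖ ^ a * (c * ‖x‖ ^ (-t)) ^ q :=
  stmt4_singular_solution_pLaplace_general n p a q t c hp1 hap hpn hq ht hc
end

section
/- Assume n ≥ 3, p ∈ (1,2], q > p−1, β > 0, 0 ≤ −a < pβ < n, and q > (n+a)(p−1)/(n−pβ). Let u be a positive solution of the integral equation (IE). Then there exist c > 0 and M > 0 such that u(x) ≥ c|x|^{−(n−pβ)/(p−1)} for all |x| ≥ M. -/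
open MeasureTheory Metric Set Filter ENNReal

/-! Only the mass of the source term `f = |y|^a u^q` near the origin is needed. Being positive
and continuous away from `0`, `f` is bounded below on a small ball inside `B_1(0)`, and that ball
lies in `B_t(x)` as soon as `t ≥ |x| + 1`. Integrating the Wolff kernel over `t ∈ (2|x|, 4|x|]`
alone then gives `W(x) ≳ |x|^{-(n-pβ)/(p-1)}`, and `R ≥ 1/C` transfers the bound to `u`. -/

theorem exists_pos_le_setLIntegral_ball {X : Type*} [PseudoMetricSpace X] [ProperSpace X]
    [MeasurableSpace X] [OpensMeasurableSpace X] (μ : Measure X) [μ.IsOpenPosMeasure]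
    [IsFiniteMeasureOnCompacts μ] {f : X → ℝ} {z : X} {r : ℝ} (hr : 0 < r)
    (hf : ContinuousOn f (closedBall z r)) (hpos : ∀ y ∈ closedBall z r, 0 < f y) :
    ∃ ℓ > 0, ENNReal.ofReal ℓ ≤ ∫⁻ y in ball z r, ENNReal.ofReal (f y) ∂μ := by
  obtain ⟨w, hw, hmin⟩ :=
    (isCompact_closedBall z r).exists_isMinOn (nonempty_closedBall.2 hr.le) hf
  have hvol : μ (ball z r) ≠ ∞ := measure_ball_lt_top.ne
  refine ⟨f w * (μ (ball z r)).toReal,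
    mul_pos (hpos w hw) (toReal_pos (measure_ball_pos μ z hr).ne' hvol), ?_⟩
  calc ENNReal.ofReal (f w * (μ (ball z r)).toReal)
      = ∫⁻ _ in ball z r, ENNReal.ofReal (f w) ∂μ := by
        rw [setLIntegral_const, ENNReal.ofReal_mul (hpos w hw).le, ofReal_toReal hvol]
    _ ≤ ∫⁻ y in ball z r, ENNReal.ofReal (f y) ∂μ :=
        setLIntegral_mono' measurableSet_ball fun y hy ↦
          ENNReal.ofReal_le_ofReal (hmin (ball_subset_closedBall hy))

theorem exists_pos_le_setLIntegral_ball_of_norm_add_one_le {E : Type*}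
    [NormedAddCommGroup E] [NormedSpace ℝ E] [FiniteDimensional ℝ E] [Nontrivial E]
    [MeasurableSpace E] [BorelSpace E] (μ : Measure E) [μ.IsAddHaarMeasure] {f : E → ℝ}
    (hf : ContinuousOn f {0}ᶜ) (hpos : ∀ y ≠ 0, 0 < f y) :
    ∃ ℓ > 0, ∀ x t, ‖x‖ + 1 ≤ t →
      ENNReal.ofReal ℓ ≤ ∫⁻ y in ball x t, ENNReal.ofReal (f y) ∂μ := by
  obtain ⟨z, hz⟩ := exists_norm_eq E (c := 1 / 2) (by norm_num)
  have hzero : closedBall z (1 / 4) ⊆ {0}ᶜ := fun y hy h0 ↦ by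
    rw [mem_closedBall, h0, dist_zero_left, hz] at hy
    norm_num at hy
  obtain ⟨ℓ, hℓ, hle⟩ := exists_pos_le_setLIntegral_ball μ (by norm_num) (hf.mono hzero)
    fun y hy ↦ hpos y (hzero hy)
  refine ⟨ℓ, hℓ, fun x t ht ↦ hle.trans (lintegral_mono_set (ball_subset_ball' ?_))⟩
  linarith [dist_le_norm_add_norm z x]

theorem ofReal_le_wolff_of_le_setLIntegral_ball {n : ℕ} {β p ℓ T : ℝ}
    {f : EuclideanSpace ℝ (Fin n) → ℝ} {x : EuclideanSpace ℝ (Fin n)}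
    (hp : 1 < p) (hpβ : p * β < n) (hℓ : 0 ≤ ℓ) (hT : 0 < T)
    (hball : ∀ t, T < t → ENNReal.ofReal ℓ ≤ ∫⁻ y in ball x t, ENNReal.ofReal (f y)) :
    ENNReal.ofReal (ℓ ^ (1 / (p - 1)) * (2 * T) ^ (-((n - p * β) / (p - 1))) / 2) ≤
      wolff n β p f x := by
  set e := p * β - n
  set r := 1 / (p - 1)
  have hr : 0 < r := one_div_pos.2 (sub_pos.2 hp)
  have h2T : 0 < 2 * T := by positivity
  set K := ((2 * T) ^ e * ℓ) ^ r / (2 * T)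
  have hK : ∀ t ∈ Ioc T (2 * T), ENNReal.ofReal K ≤
      (ENNReal.ofReal (t ^ e) * ∫⁻ y in ball x t, ENNReal.ofReal (f y)) ^ r /
        ENNReal.ofReal t := by
    intro t ⟨hTt, ht2T⟩
    have ht : 0 < t := hT.trans hTt
    rw [ENNReal.ofReal_div_of_pos h2T, ← ENNReal.ofReal_rpow_of_nonneg (by positivity) hr.le,
      ENNReal.ofReal_mul (by positivity)]
    refine ENNReal.div_le_div (ENNReal.rpow_le_rpow (mul_le_mul' ?_ (hball t hTt)) hr.le)
      (ENNReal.ofReal_le_ofReal ht2T)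
    exact ENNReal.ofReal_le_ofReal (Real.rpow_le_rpow_of_nonpos ht ht2T (by linarith))
  have hKT : K * (2 * T - T) = ℓ ^ r * (2 * T) ^ (-((n - p * β) / (p - 1))) / 2 := by
    have hexp : e * r = -((n - p * β) / (p - 1)) := by simp only [e, r]; ring
    simp only [K]
    rw [Real.mul_rpow (by positivity) hℓ, ← Real.rpow_mul h2T.le, hexp]
    field_simp
    norm_num
  calc ENNReal.ofReal (ℓ ^ r * (2 * T) ^ (-((n - p * β) / (p - 1))) / 2)
      = ∫⁻ _ in Ioc T (2 * T), ENNReal.ofReal K := by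
        rw [setLIntegral_const, Real.volume_Ioc, ← ENNReal.ofReal_mul' (by linarith), hKT]
    _ ≤ ∫⁻ t in Ioc T (2 * T), (ENNReal.ofReal (t ^ e) *
          ∫⁻ y in ball x t, ENNReal.ofReal (f y)) ^ r / ENNReal.ofReal t :=
        setLIntegral_mono' measurableSet_Ioc hK
    _ ≤ wolff n β p f x := lintegral_mono_set fun t ht ↦ hT.trans ht.1

theorem stmt7_fast_rate_lower_bound_general
    (n : ℕ) (hn : 3 ≤ n) (p β a q : ℝ)
    (hp1 : 1 < p) (hβn : p * β < n)
    (R u : EuclideanSpace ℝ (Fin n) → ℝ)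
    (hR : DoubleBounded R) (hu : IsIESolutionWith n β p a q R u) :
    ∃ (c M : ℝ), 0 < c ∧ 0 < M ∧
      ∀ x : EuclideanSpace ℝ (Fin n), M ≤ ‖x‖ →
        c * ‖x‖ ^ (-((n - p * β) / (p - 1))) ≤ u x := by
  obtain ⟨C, hC, hRC⟩ := hR
  obtain ⟨hu_cont, hu_pos, hu_eq⟩ := hu
  have hn0 : NeZero n := ⟨by omega⟩
  obtain ⟨ℓ, hℓ, hball⟩ := exists_pos_le_setLIntegral_ball_of_norm_add_one_le volume
    (f := fun y ↦ ‖y‖ ^ a * u y ^ q)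
    ((continuous_norm.continuousOn.rpow_const fun y hy ↦ Or.inl (norm_ne_zero_iff.2 hy)).mul
      (hu_cont.continuousOn.rpow_const fun y _ ↦ Or.inl (hu_pos y).ne'))
    fun y hy ↦ mul_pos (Real.rpow_pos_of_pos (norm_pos_iff.2 hy) a)
      (Real.rpow_pos_of_pos (hu_pos y) q)
  set γ := (n - p * β) / (p - 1)
  refine ⟨ℓ ^ (1 / (p - 1)) * 4 ^ (-γ) / 2 / C, 1, by positivity, one_pos, fun x hx ↦ ?_⟩
  have hW := ofReal_le_wolff_of_le_setLIntegral_ball (T := 2 * ‖x‖) hp1 hβn hℓ.le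
    (by positivity) fun t ht ↦ hball x t (by linarith)
  rw [ENNReal.ofReal_le_iff_le_toReal (hu_eq x).1] at hW
  rw [(hu_eq x).2]
  calc ℓ ^ (1 / (p - 1)) * 4 ^ (-γ) / 2 / C * ‖x‖ ^ (-γ)
      = 1 / C * (ℓ ^ (1 / (p - 1)) * (2 * (2 * ‖x‖)) ^ (-γ) / 2) := by
        rw [← mul_assoc, two_mul (2 : ℝ), two_add_two_eq_four,
          Real.mul_rpow (by norm_num) (norm_nonneg x)]
        ring
    _ ≤ R x * (wolff n β p (fun y ↦ ‖y‖ ^ a * u y ^ q) x).toReal :=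
        mul_le_mul (hRC x).1 hW (by positivity) ((one_div_pos.2 hC).le.trans (hRC x).1)

/-- any positive solution of the integral equation is bounded below by a
multiple of the fast decay rate profile `|x|^{-(n-pβ)/(p-1)}` near infinity. -/
theorem stmt7_fast_rate_lower_bound
    (n : ℕ) (hn : 3 ≤ n) (p β a q : ℝ)
    (hp1 : 1 < p) (hp2 : p ≤ 2) (hβ : 0 < β)
    (ha0 : 0 ≤ -a) (ha : -a < p * β) (hβn : p * β < n)
    (hq1 : p - 1 < q) (hq2 : (n + a) * (p - 1) / (n - p * β) < q)
    (R u : EuclideanSpace ℝ (Fin n) → ℝ)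
    (hR : DoubleBounded R) (hu : IsIESolutionWith n β p a q R u) :
    ∃ (c M : ℝ), 0 < c ∧ 0 < M ∧
      ∀ x : EuclideanSpace ℝ (Fin n), M ≤ ‖x‖ →
        c * ‖x‖ ^ (-((n - p * β) / (p - 1))) ≤ u x :=
  stmt7_fast_rate_lower_bound_general n hn p β a q hp1 hβn R u hR hu
end
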